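/- Let θ ∈ (0,1), K ≥ 1, a = 1 − exp(−K/(1−θ)), and ε ∈ (0, min{1−a, 1−θ}). Set U = log(1−ε) / (log(θ·ε·(1−ε−θ)) − log(2K)) and N = 1/U. Then for any z₀ with 1 < z₀ < min{((a+ε/2)/a)^U, (θ+ε)/θ, (1−ε)/θ}, we have (K/θ)·(z₀θ)^N/(1 − z₀θ) + a·z₀^N ≤ a + ε. -/

import Mathlib

/-!
Write `q = z₀θ` and split the sum into a tail and a head term. The exponent
`N = 1 / U` is exactly `log_{1-ε} (θε(1-ε-θ)/(2K))`, so `q < 1 - ε` gives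
`q^N ≤ θε(1-ε-θ)/(2K)`, while `q < θ + ε` keeps `1 - q ≥ 1 - ε - θ`; together the tail
is at most `ε/2`. For the head, `z₀ < ((a+ε/2)/a)^U` with `U = N⁻¹` gives
`a z₀^N < a + ε/2`.
-/

open Real

lemma one_sub_exp_neg_pos {x : ℝ} (hx : 0 < x) : 0 < 1 - exp (-x) := by
  have : exp (-x) < 1 := exp_lt_one_iff.mpr (neg_lt_zero.mpr hx)
  linarith

lemma mul_div_one_sub_le_half {K θ ε q p : ℝ} (hK : 0 < K) (hθ : 0 < θ) (hδ : 0 < 1 - ε - θ)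
    (hq : q < θ + ε) (hp0 : 0 ≤ p) (hp : p ≤ θ * ε * (1 - ε - θ) / (2 * K)) :
    K / θ * p / (1 - q) ≤ ε / 2 :=
  calc K / θ * p / (1 - q)
      ≤ K / θ * (θ * ε * (1 - ε - θ) / (2 * K)) / (1 - ε - θ) :=
        div_le_div₀ (mul_nonneg (by positivity) (hp0.trans hp))
          (mul_le_mul_of_nonneg_left hp (by positivity)) hδ (by linarith)
    _ = ε / 2 := by field_simp

lemma mul_rpow_le_add_half {a ε z N : ℝ} (ha : 0 < a) (hε : 0 ≤ ε) (hz : 0 ≤ z) (hN : 0 < N)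
    (h : z < ((a + ε / 2) / a) ^ N⁻¹) : a * z ^ N ≤ a + ε / 2 := by
  have hzN : z ^ N < (a + ε / 2) / a := (lt_rpow_inv_iff_of_pos hz (by positivity) hN).mp h
  calc a * z ^ N ≤ a * ((a + ε / 2) / a) := by gcongr
    _ = a + ε / 2 := by field_simp

/-- Key quantitative bound on the generating function of the return time:
the stated choice of `z₀`, `U`, `N` makes `(K/θ)(z₀θ)^N/(1-z₀θ) + a z₀^N ≤ a + ε`. -/
theorem stmt_4 (θ K a ε U N z₀ : ℝ)
    (hθ : θ ∈ Set.Ioo (0:ℝ) 1) (hK : 1 ≤ K)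
    (ha : a = 1 - Real.exp (-(K / (1 - θ))))
    (hε : ε ∈ Set.Ioo 0 (min (1 - a) (1 - θ)))
    (hU : U = Real.log (1 - ε) / (Real.log (θ * ε * (1 - ε - θ)) - Real.log (2 * K)))
    (hN : N = 1 / U)
    (hz₀ : 1 < z₀)
    (hz₀' : z₀ < min (((a + ε / 2) / a) ^ U) (min ((θ + ε) / θ) ((1 - ε) / θ))) :
    (K / θ) * (z₀ * θ) ^ N / (1 - z₀ * θ) + a * z₀ ^ N ≤ a + ε := by
  have hθ0 : 0 < θ := hθ.1
  obtain ⟨hε0, hεθ⟩ : 0 < ε ∧ ε < 1 - θ := ⟨hε.1, (lt_min_iff.mp hε.2).2⟩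
  obtain ⟨hz_head, hz_mid, hz_small⟩ :
      z₀ < ((a + ε / 2) / a) ^ U ∧ z₀ * θ < θ + ε ∧ z₀ * θ < 1 - ε := by
    simp only [lt_min_iff, lt_div_iff₀ hθ0] at hz₀'
    exact hz₀'
  have hδ : 0 < 1 - ε - θ := by linarith
  have ha0 : 0 < a := ha ▸ one_sub_exp_neg_pos (div_pos (by linarith) (by linarith))
  set r := θ * ε * (1 - ε - θ) / (2 * K) with hr
  have hr0 : 0 < r := by positivity
  have hr1 : r < 1 := by
    rw [div_lt_one (by linarith)]
    nlinarith [mul_pos hθ0 hε0]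
  have hN_logb : N = logb (1 - ε) r := by
    rw [hN, hU, one_div_div, logb, hr, log_div (by positivity) (by positivity)]
  have hN0 : 0 < N := hN_logb ▸ logb_pos_of_base_lt_one (by linarith) (by linarith) hr0 hr1
  have hU_inv : U = N⁻¹ := by rw [hN, one_div, inv_inv]
  have hz₀θ : 0 ≤ z₀ * θ := by positivity
  have hpow : (z₀ * θ) ^ N ≤ r :=
    calc (z₀ * θ) ^ N ≤ (1 - ε) ^ N := rpow_le_rpow hz₀θ hz_small.le hN0.le
      _ = r := by rw [hN_logb, rpow_logb (by linarith) (by linarith) hr0]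
  have htail := mul_div_one_sub_le_half (by linarith) hθ0 hδ hz_mid (rpow_nonneg hz₀θ N) hpow
  have hhead := mul_rpow_le_add_half ha0 hε0.le (by linarith) hN0 (hU_inv ▸ hz_head)
  linarith
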